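/- Fix k, l < ω, a function F : {0,…,l} → {0,…,k}, ordinals ε_0 ≥ … ≥ ε_l, and a tree P with rank(P) = ω^{ω^{ε_0}}·…·ω^{ω^{ε_l}}. Define f : Λ_2(P) → {0,…,k} by f(s,t) = F(ς_P(s,t)). Then for every j ≤ k, setting A = {i ≤ l : F(i) = j} and α = ω^{ω^{ε_0}·1_A(0)}·…·ω^{ω^{ε_l}·1_A(l)} (with α = 1 if A = ∅), every subtree Q of P such that f(s,t) = j for all (s,t) ∈ Λ_2(Q) satisfies rank(Q) ≤ α. -/

import Mathlib

/-!
Write `τ_P(t) < rank P = α_l` in the mixed radix `ω^{ω^{ε_0}}, …, ω^{ω^{ε_l}}`. Since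
`P^{α_i·δ} \ P^{α_i·(δ+1)}` consists of the nodes with `τ_P(t) / α_i = δ`, the value
`ς_P(s,t)` is the position of the most significant digit in which `τ_P(s)` and `τ_P(t)` differ,
and for `s < t` the digit of `τ_P(t)` there is the smaller one. On a `j`-homogeneous `Q` that
position always lies in `A`, so keeping only the digits at positions in `A` and reading them in
the radices `ω^{ω^{ε_i}·1_A(i)}` gives a map `Q → α` that strictly decreases along the tree
order; hence `rank Q ≤ α`.
-/

open Ordinal Set

universe u

/-- The set of maximal elements ("leaves") of `P`. -/
def treeLeaves {α : Type u} [PartialOrder α] (P : Set α) : Set α :=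
  {t ∈ P | ∀ s ∈ P, ¬ t < s}

/-- The derivative `P' = P \ Leaves P`. -/
def treeDeriv {α : Type u} [PartialOrder α] (P : Set α) : Set α :=
  P \ treeLeaves P

/-- The transfinite iterated derivative `P^ξ`. -/
noncomputable def derivIter {α : Type u} [PartialOrder α] (P : Set α) (ξ : Ordinal.{u}) :
    Set α :=
  Ordinal.limitRecOn ξ P (fun _ ih => treeDeriv ih)
    (fun o _ ih => ⋂ (ζ : Set.Iio o), ih ζ.1 ζ.2)

/-- `P` is a tree: every ancestor set is well-ordered (a well-founded chain). -/
def IsTree {α : Type u} [PartialOrder α] (P : Set α) : Prop :=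
  ∀ t ∈ P, IsChain (· ≤ ·) {s ∈ P | s ≤ t} ∧ {s ∈ P | s ≤ t}.WellFoundedOn (· < ·)

/-- `P` is well-founded: some transfinite derivative is empty. -/
def IsWFTree {α : Type u} [PartialOrder α] (P : Set α) : Prop :=
  ∃ ξ : Ordinal.{u}, derivIter P ξ = ∅

/-- The rank of a well-founded tree: the least `ξ` with `P^ξ = ∅`. -/
noncomputable def treeRank {α : Type u} [PartialOrder α] (P : Set α) : Ordinal.{u} :=
  sInf {ξ | derivIter P ξ = ∅}

/-- `τ_P(t)`: the largest ordinal `ξ` with `t ∈ P^ξ`. -/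
noncomputable def treeTau {α : Type u} [PartialOrder α] (P : Set α) (t : α) : Ordinal.{u} :=
  sSup {ξ | t ∈ derivIter P ξ}

/-- `τ_{P,β}(t)`: the largest ordinal `ξ` with `t ∈ P^{β·ξ}`. -/
noncomputable def treeTauMul {α : Type u} [PartialOrder α] (P : Set α) (β : Ordinal.{u})
    (t : α) : Ordinal.{u} :=
  sSup {ξ | t ∈ derivIter P (β * ξ)}

/-- `alpProd ε i = ω^{ω^{ε 0}} · ⋯ · ω^{ω^{ε i}}`. -/
noncomputable def alpProd (ε : ℕ → Ordinal.{u}) : ℕ → Ordinal.{u}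
  | 0 => omega0 ^ omega0 ^ ε 0
  | (i + 1) => alpProd ε i * omega0 ^ omega0 ^ ε (i + 1)

/-- The separation function `ς_P` of a tree whose rank has decomposition
`ω^{ω^{ε 0}} ⋯ ω^{ω^{ε l}}`: the least `i` such that `s, t` lie in the same block
`P^{α_i·δ} \ P^{α_i·(δ+1)}` for some ordinal `δ`. -/
noncomputable def sep {α : Type u} [PartialOrder α] (P : Set α) (ε : ℕ → Ordinal.{u})
    (s t : α) : ℕ :=
  sInf {i : ℕ | ∃ δ : Ordinal.{u},
    s ∈ derivIter P (alpProd ε i * δ) \ derivIter P (alpProd ε i * (δ + 1)) ∧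
    t ∈ derivIter P (alpProd ε i * δ) \ derivIter P (alpProd ε i * (δ + 1))}

/-- `indProd ε A l = ω^{ω^{ε 0}·1_A(0)} ⋯ ω^{ω^{ε l}·1_A(l)}`. -/
noncomputable def indProd (ε : ℕ → Ordinal.{u}) (A : Set ℕ) : ℕ → Ordinal.{u}
  | 0 => omega0 ^ (omega0 ^ ε 0 * A.indicator (fun _ => (1 : Ordinal.{u})) 0)
  | (i + 1) => indProd ε A i *
      omega0 ^ (omega0 ^ ε (i + 1) * A.indicator (fun _ => (1 : Ordinal.{u})) (i + 1))

/-- `sumPow ε i = ω^{ε 0} + ⋯ + ω^{ε (i-1)}` (the partial sums `γ_i`). -/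
noncomputable def sumPow (ε : ℕ → Ordinal.{u}) : ℕ → Ordinal.{u}
  | 0 => 0
  | (i + 1) => sumPow ε i + omega0 ^ ε i

/-- `indSum ε A i = Σ_{n < i} 1_A(n)·ω^{ε n}`. -/
noncomputable def indSum (ε : ℕ → Ordinal.{u}) (A : Set ℕ) : ℕ → Ordinal.{u}
  | 0 => 0
  | (i + 1) => indSum ε A i + A.indicator (fun _ => (1 : Ordinal.{u})) i * omega0 ^ ε i

namespace Ordinal

theorem div_div_eq_div_mul (a : Ordinal.{u}) {b c : Ordinal.{u}} (hb : b ≠ 0) (hc : c ≠ 0) :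
    a / b / c = a / (b * c) := by
  apply le_antisymm
  · rw [div_le hc, ← lt_mul_iff_div_lt hb, ← mul_assoc]
    exact lt_mul_succ_div a (mul_ne_zero hb hc)
  · rw [div_le (mul_ne_zero hb hc), mul_assoc]
    calc a < b * Order.succ (a / b) := lt_mul_succ_div a hb
      _ ≤ b * (c * Order.succ (a / b / c)) :=
        mul_le_mul_right (Order.succ_le_of_lt (lt_mul_succ_div _ hc)) b

theorem mod_lt_mod_of_lt_of_div_eq {a b c : Ordinal.{u}} (hab : a < b) (h : a / c = b / c) :
    a % c < b % c := by
  rw [← div_add_mod a c, ← div_add_mod b c, h] at hab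
  exact (add_lt_add_iff_left _).1 hab

end Ordinal

section MixedRadix

variable (r : ℕ → Ordinal.{u})

noncomputable def radixProd : ℕ → Ordinal.{u}
  | 0 => r 0
  | n + 1 => radixProd n * r (n + 1)

noncomputable def radixValue (c : ℕ → Ordinal.{u}) : ℕ → Ordinal.{u}
  | 0 => c 0
  | n + 1 => radixProd r n * c (n + 1) + radixValue c n

noncomputable def radixDigit (x : Ordinal.{u}) : ℕ → Ordinal.{u}
  | 0 => x % r 0
  | i + 1 => x / radixProd r i % r (i + 1)

variable {r}

theorem radixProd_ne_zero (hr : ∀ i, r i ≠ 0) : ∀ n, radixProd r n ≠ 0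
  | 0 => hr 0
  | n + 1 => mul_ne_zero (radixProd_ne_zero hr n) (hr (n + 1))

theorem radixProd_mul_add_radixValue_lt {c : ℕ → Ordinal.{u}} {n : ℕ}
    {d : Ordinal.{u}} (hd : c (n + 1) < d) (ih : radixValue r c n < radixProd r n) :
    radixProd r n * c (n + 1) + radixValue r c n < radixProd r n * d :=
  calc radixProd r n * c (n + 1) + radixValue r c n
      < radixProd r n * c (n + 1) + radixProd r n := add_lt_add_right ih _
    _ = radixProd r n * Order.succ (c (n + 1)) := by rw [Order.succ_eq_add_one, mul_add_one]
    _ ≤ radixProd r n * d := mul_le_mul_right (Order.succ_le_of_lt hd) _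

theorem radixValue_lt_radixProd {c : ℕ → Ordinal.{u}} (hc : ∀ i, c i < r i) :
    ∀ n, radixValue r c n < radixProd r n
  | 0 => hc 0
  | n + 1 => radixProd_mul_add_radixValue_lt (hc (n + 1)) (radixValue_lt_radixProd hc n)

theorem radixValue_lt_radixValue {c c' : ℕ → Ordinal.{u}} (hc : ∀ i, c i < r i) {m n : ℕ}
    (hm : c m < c' m) (heq : ∀ i, m < i → c i = c' i) (hmn : m ≤ n) :
    radixValue r c n < radixValue r c' n := by
  induction n, hmn using Nat.le_induction with
  | base =>
    cases m with
    | zero => exact hm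
    | succ m =>
      exact (radixProd_mul_add_radixValue_lt hm (radixValue_lt_radixProd hc m)).trans_le
        le_self_add
  | succ n hmn ih =>
    simp only [radixValue, heq (n + 1) (Nat.lt_succ_of_le hmn)]
    exact add_lt_add_right ih _

theorem radixDigit_lt (hr : ∀ i, r i ≠ 0) (x : Ordinal.{u}) : ∀ i, radixDigit r x i < r i
  | 0 => Ordinal.mod_lt _ (hr 0)
  | _ + 1 => Ordinal.mod_lt _ (hr _)

theorem div_radixProd_succ (hr : ∀ i, r i ≠ 0) (x : Ordinal.{u}) (i : ℕ) :
    x / radixProd r (i + 1) = x / radixProd r i / r (i + 1) :=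
  (Ordinal.div_div_eq_div_mul x (radixProd_ne_zero hr i) (hr (i + 1))).symm

theorem div_radixProd_eq_of_le (hr : ∀ i, r i ≠ 0) {x y : Ordinal.{u}} {m : ℕ}
    (hm : x / radixProd r m = y / radixProd r m) {i : ℕ} (hi : m ≤ i) :
    x / radixProd r i = y / radixProd r i := by
  induction i, hi using Nat.le_induction with
  | base => exact hm
  | succ i _ ih => rw [div_radixProd_succ hr, div_radixProd_succ hr, ih]

theorem radixDigit_lt_radixDigit (hr : ∀ i, r i ≠ 0) {x y : Ordinal.{u}} (hyx : y < x) {m : ℕ}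
    (hm : y / radixProd r m = x / radixProd r m)
    (hlt : ∀ i < m, y / radixProd r i ≠ x / radixProd r i) :
    radixDigit r y m < radixDigit r x m := by
  cases m with
  | zero => exact Ordinal.mod_lt_mod_of_lt_of_div_eq hyx hm
  | succ m =>
    have hdiv : y / radixProd r m < x / radixProd r m :=
      (Ordinal.div_le_left hyx.le _).lt_of_ne (hlt m m.lt_succ_self)
    rw [div_radixProd_succ hr, div_radixProd_succ hr] at hm
    exact Ordinal.mod_lt_mod_of_lt_of_div_eq hdiv hm

theorem radixDigit_eq_of_lt (hr : ∀ i, r i ≠ 0) {x y : Ordinal.{u}} {m : ℕ}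
    (hm : x / radixProd r m = y / radixProd r m) :
    ∀ i, m < i → radixDigit r x i = radixDigit r y i
  | 0, hi => absurd hi (Nat.not_lt_zero m)
  | i + 1, hi => by
    simp only [radixDigit, div_radixProd_eq_of_le hr hm (Nat.lt_succ_iff.1 hi)]

theorem indicator_radixDigit_lt {r' : ℕ → Ordinal.{u}} (hr : ∀ i, r i ≠ 0)
    (hr' : ∀ i, r' i ≠ 0) {A : Set ℕ} (hA : ∀ i ∈ A, r' i = r i) (x : Ordinal.{u}) (i : ℕ) :
    A.indicator (radixDigit r x) i < r' i := by
  by_cases hi : i ∈ A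
  · rw [indicator_of_mem hi, hA i hi]
    exact radixDigit_lt hr x i
  · rw [indicator_of_notMem hi]
    exact pos_iff_ne_zero.2 (hr' i)

/-- `sInf {i | …}` is the position of the most significant digit in which `y` and `x`
differ. -/
theorem radixValue_indicator_radixDigit_lt {r' : ℕ → Ordinal.{u}} (hr : ∀ i, r i ≠ 0)
    (hr' : ∀ i, r' i ≠ 0) {A : Set ℕ} (hA : ∀ i ∈ A, r' i = r i) {x y : Ordinal.{u}}
    (hyx : y < x) {n : ℕ} (hn : y / radixProd r n = x / radixProd r n)
    (hsep : sInf {i | y / radixProd r i = x / radixProd r i} ∈ A) :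
    radixValue r' (A.indicator (radixDigit r y)) n <
      radixValue r' (A.indicator (radixDigit r x)) n := by
  have hne : {i | y / radixProd r i = x / radixProd r i}.Nonempty := ⟨n, hn⟩
  set m := sInf {i | y / radixProd r i = x / radixProd r i}
  have hm : y / radixProd r m = x / radixProd r m := Nat.sInf_mem hne
  refine radixValue_lt_radixValue (indicator_radixDigit_lt hr hr' hA y) (m := m) ?_ ?_
    (Nat.sInf_le hn)
  · rw [indicator_of_mem hsep, indicator_of_mem hsep]
    exact radixDigit_lt_radixDigit hr hyx hm fun i hi => Nat.notMem_of_lt_sInf hi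
  · intro i hi
    simp only [Set.indicator, radixDigit_eq_of_lt hr hm i hi]

end MixedRadix

theorem alpProd_eq_radixProd (ε : ℕ → Ordinal.{u}) :
    alpProd ε = radixProd fun i => ω ^ ω ^ ε i := by
  funext n
  induction n with
  | zero => rfl
  | succ n ih => rw [alpProd, radixProd, ih]

theorem alpProd_ne_zero (ε : ℕ → Ordinal.{u}) (i : ℕ) : alpProd ε i ≠ 0 := by
  rw [alpProd_eq_radixProd]
  exact radixProd_ne_zero (fun _ => opow_ne_zero _ omega0_ne_zero) i

theorem indProd_eq_radixProd (ε : ℕ → Ordinal.{u}) (A : Set ℕ) :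
    indProd ε A = radixProd fun i => ω ^ (ω ^ ε i * A.indicator (fun _ => 1) i) := by
  funext n
  induction n with
  | zero => rfl
  | succ n ih => rw [indProd, radixProd, ih]

section Derivative

variable {α : Type u} [PartialOrder α] {P : Set α}

theorem derivIter_zero (P : Set α) : derivIter P 0 = P :=
  Ordinal.limitRecOn_zero ..

theorem derivIter_add_one (P : Set α) (ξ : Ordinal.{u}) :
    derivIter P (ξ + 1) = treeDeriv (derivIter P ξ) :=
  Ordinal.limitRecOn_add_one ..

theorem derivIter_limit (P : Set α) {ξ : Ordinal.{u}} (h : Order.IsSuccLimit ξ) :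
    derivIter P ξ = ⋂ ζ : Set.Iio ξ, derivIter P ζ.1 :=
  Ordinal.limitRecOn_limit _ _ _ _ h

theorem mem_treeDeriv_iff {t : α} : t ∈ treeDeriv P ↔ t ∈ P ∧ ∃ s ∈ P, t < s := by
  simp only [treeDeriv, treeLeaves, mem_sdiff, mem_ofPred_eq, not_and, not_forall, not_not,
    exists_prop]
  exact ⟨fun ⟨ht, h⟩ => ⟨ht, h ht⟩, fun ⟨ht, h⟩ => ⟨ht, fun _ => h⟩⟩

theorem derivIter_antitone (P : Set α) : Antitone (derivIter P) := by
  intro ζ ξ hζξ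
  induction ξ using Ordinal.limitRecOn with
  | zero => rw [nonpos_iff_eq_zero.1 hζξ]
  | add_one ξ ih =>
    rcases hζξ.eq_or_lt with rfl | h
    · rfl
    · rw [derivIter_add_one]
      exact sdiff_subset.trans (ih (Order.lt_add_one_iff.1 h))
  | limit ξ hξ _ =>
    rcases hζξ.eq_or_lt with rfl | h
    · rfl
    · rw [derivIter_limit P hξ]
      exact iInter_subset (fun ζ : Set.Iio ξ => derivIter P ζ.1) ⟨ζ, h⟩

theorem derivIter_subset (P : Set α) (ξ : Ordinal.{u}) : derivIter P ξ ⊆ P := by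
  simpa only [derivIter_zero] using derivIter_antitone P (zero_le : 0 ≤ ξ)

theorem mem_derivIter_of_lt {s t : α} (hs : s ∈ P) (hst : s < t) {ξ : Ordinal.{u}}
    (ht : t ∈ derivIter P ξ) : s ∈ derivIter P ξ := by
  induction ξ using Ordinal.limitRecOn with
  | zero => rwa [derivIter_zero]
  | add_one ξ ih =>
    rw [derivIter_add_one] at ht ⊢
    have ht' := (mem_treeDeriv_iff.1 ht).1
    exact mem_treeDeriv_iff.2 ⟨ih ht', t, ht', hst⟩
  | limit ξ hξ ih =>
    rw [derivIter_limit P hξ, mem_iInter] at ht ⊢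
    exact fun ζ => ih ζ.1 ζ.2 (ht ζ)

theorem treeRank_le_of_strictAnti {Q : Set α} {β : Ordinal.{u}} (g : α → Ordinal.{u})
    (hg : ∀ t ∈ Q, g t < β) (hanti : ∀ s ∈ Q, ∀ t ∈ Q, s < t → g t < g s) :
    treeRank Q ≤ β := by
  have hle : ∀ ξ, ∀ t ∈ derivIter Q ξ, ξ ≤ g t := by
    intro ξ
    induction ξ using WellFoundedLT.induction with
    | _ ξ ih =>
      refine fun t ht => le_of_forall_lt fun ζ hζ => ?_
      have ht' := derivIter_antitone Q (Order.add_one_le_of_lt hζ) ht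
      rw [derivIter_add_one] at ht'
      obtain ⟨htζ, s, hs, hts⟩ := mem_treeDeriv_iff.1 ht'
      exact (ih ζ hζ s hs).trans_lt
        (hanti t (derivIter_subset Q ζ htζ) s (derivIter_subset Q ζ hs) hts)
  refine csInf_le' (eq_empty_iff_forall_notMem.2 fun t ht => ?_)
  exact (hle β t ht).not_gt (hg t (derivIter_subset Q β ht))

end Derivative

section Tau

variable {α : Type u} [PartialOrder α] {P : Set α}

theorem bddAbove_setOf_mem_derivIter (hWF : IsWFTree P) (t : α) :
    BddAbove {ξ : Ordinal.{u} | t ∈ derivIter P ξ} := by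
  obtain ⟨ξ₀, h₀⟩ := hWF
  refine ⟨ξ₀, fun ξ hξ => not_lt.1 fun h => ?_⟩
  simpa [h₀] using derivIter_antitone P h.le hξ

theorem mem_derivIter_treeTau {t : α} (ht : t ∈ P) : t ∈ derivIter P (treeTau P t) := by
  have hne : {ξ : Ordinal.{u} | t ∈ derivIter P ξ}.Nonempty :=
    ⟨0, by rwa [mem_ofPred_eq, derivIter_zero]⟩
  rcases Ordinal.zero_or_succ_or_isSuccLimit (treeTau P t) with h | ⟨a, h⟩ | h
  · rwa [h, derivIter_zero]
  · obtain ⟨ξ, hξ, haξ⟩ := exists_lt_of_lt_csSup hne (h ▸ Order.lt_succ a)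
    have hle : treeTau P t ≤ ξ := by rw [← h]; exact Order.succ_le_of_lt haξ
    exact derivIter_antitone P hle hξ
  · rw [derivIter_limit P h, mem_iInter]
    rintro ⟨ζ, hζ⟩
    obtain ⟨ξ, hξ, hζξ⟩ := exists_lt_of_lt_csSup hne hζ
    exact derivIter_antitone P hζξ.le hξ

theorem mem_derivIter_iff_le_treeTau (hWF : IsWFTree P) {t : α} (ht : t ∈ P)
    {ξ : Ordinal.{u}} :
    t ∈ derivIter P ξ ↔ ξ ≤ treeTau P t :=
  ⟨fun h => le_csSup (bddAbove_setOf_mem_derivIter hWF t) h,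
    fun h => derivIter_antitone P h (mem_derivIter_treeTau ht)⟩

theorem treeTau_lt_treeRank (hWF : IsWFTree P) {t : α} (ht : t ∈ P) :
    treeTau P t < treeRank P := by
  refine not_le.1 fun h => ?_
  have := (mem_derivIter_iff_le_treeTau hWF ht).2 h
  rwa [show derivIter P (treeRank P) = ∅ from csInf_mem hWF] at this

theorem treeTau_lt_treeTau (hWF : IsWFTree P) {s t : α} (hs : s ∈ P) (ht : t ∈ P)
    (hst : s < t) : treeTau P t < treeTau P s := by
  have htτ := mem_derivIter_treeTau ht
  rw [← Order.add_one_le_iff, ← mem_derivIter_iff_le_treeTau hWF hs, derivIter_add_one]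
  exact mem_treeDeriv_iff.2 ⟨mem_derivIter_of_lt hs hst htτ, t, htτ, hst⟩

theorem mem_block_iff (hWF : IsWFTree P) {u : α} (hu : u ∈ P) {β : Ordinal.{u}} (hβ : β ≠ 0)
    (δ : Ordinal.{u}) :
    u ∈ derivIter P (β * δ) \ derivIter P (β * (δ + 1)) ↔ treeTau P u / β = δ := by
  rw [mem_sdiff, mem_derivIter_iff_le_treeTau hWF hu, mem_derivIter_iff_le_treeTau hWF hu,
    not_le, Ordinal.div_eq_iff hβ]

theorem sep_eq_sInf (hWF : IsWFTree P) {ε : ℕ → Ordinal.{u}} {s t : α} (hs : s ∈ P)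
    (ht : t ∈ P) :
    sep P ε s t = sInf {i | treeTau P t / alpProd ε i = treeTau P s / alpProd ε i} := by
  refine congrArg sInf (ext fun i => ⟨fun ⟨δ, hsδ, htδ⟩ => ?_, fun h => ?_⟩)
  · rw [mem_ofPred_eq, (mem_block_iff hWF hs (alpProd_ne_zero ε i) δ).1 hsδ,
      (mem_block_iff hWF ht (alpProd_ne_zero ε i) δ).1 htδ]
  · exact ⟨_, (mem_block_iff hWF hs (alpProd_ne_zero ε i) _).2 h.symm,
      (mem_block_iff hWF ht (alpProd_ne_zero ε i) _).2 rfl⟩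

end Tau

theorem statement2_general {α : Type u} [PartialOrder α] (P : Set α)
    (hWF : IsWFTree P) (k l : ℕ) (ε : ℕ → Ordinal.{u})
    (hrank : treeRank P = alpProd ε l) (F : Fin (l + 1) → Fin (k + 1))
    (f : α → α → Fin (k + 1))
    (hf : ∀ s ∈ P, ∀ t ∈ P, s < t →
      ∃ h : sep P ε s t < l + 1, f s t = F ⟨sep P ε s t, h⟩)
    (j : Fin (k + 1)) (Q : Set α) (hQP : Q ⊆ P)
    (hconst : ∀ s ∈ Q, ∀ t ∈ Q, s < t → f s t = j) :
    treeRank Q ≤ indProd ε {i : ℕ | ∃ h : i < l + 1, F ⟨i, h⟩ = j} l := by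
  set A : Set ℕ := {i : ℕ | ∃ h : i < l + 1, F ⟨i, h⟩ = j}
  set r : ℕ → Ordinal.{u} := fun i => ω ^ ω ^ ε i
  have hr : ∀ i, r i ≠ 0 := fun _ => opow_ne_zero _ omega0_ne_zero
  have hr' : ∀ i, ω ^ (ω ^ ε i * A.indicator (fun _ => 1) i) ≠ 0 :=
    fun _ => opow_ne_zero _ omega0_ne_zero
  have hrA : ∀ i ∈ A, ω ^ (ω ^ ε i * A.indicator (fun _ => 1) i) = r i := fun i hi => by
    rw [indicator_of_mem hi, mul_one]
  rw [indProd_eq_radixProd]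
  refine treeRank_le_of_strictAnti
    (fun t => radixValue _ (A.indicator (radixDigit r (treeTau P t))) l)
    (fun t _ => radixValue_lt_radixProd (indicator_radixDigit_lt hr hr' hrA _) l) ?_
  intro s hs t ht hst
  have hτ : ∀ u ∈ P, treeTau P u / alpProd ε l = 0 := fun u hu =>
    Ordinal.div_eq_zero_of_lt (hrank ▸ treeTau_lt_treeRank hWF hu)
  obtain ⟨hsep, hfst⟩ := hf s (hQP hs) t (hQP ht) hst
  have hA : sep P ε s t ∈ A := ⟨hsep, hfst ▸ hconst s hs t ht hst⟩
  rw [sep_eq_sInf hWF (hQP hs) (hQP ht), alpProd_eq_radixProd] at hA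
  refine radixValue_indicator_radixDigit_lt hr hr' hrA
    (treeTau_lt_treeTau hWF (hQP hs) (hQP ht) hst) ?_ hA
  rw [← alpProd_eq_radixProd, hτ s (hQP hs), hτ t (hQP ht)]

/-- Sharpness, part (ii): if `f(s,t) = F(ς_P(s,t))`, then for each
color `j`, any subtree `Q` of `P` on which all pairs receive color `j` has rank at
most `ω^{ω^{ε_0}·1_A(0)}⋯ω^{ω^{ε_l}·1_A(l)}`, where `A = {i ≤ l : F(i) = j}`. -/
theorem statement2 {α : Type u} [PartialOrder α] (P : Set α) (hP : IsTree P)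
    (hWF : IsWFTree P) (k l : ℕ) (ε : ℕ → Ordinal.{u}) (hε : ∀ i < l, ε (i + 1) ≤ ε i)
    (hrank : treeRank P = alpProd ε l) (F : Fin (l + 1) → Fin (k + 1))
    (f : α → α → Fin (k + 1))
    (hf : ∀ s ∈ P, ∀ t ∈ P, s < t →
      ∃ h : sep P ε s t < l + 1, f s t = F ⟨sep P ε s t, h⟩)
    (j : Fin (k + 1)) (Q : Set α) (hQP : Q ⊆ P)
    (hconst : ∀ s ∈ Q, ∀ t ∈ Q, s < t → f s t = j) :
    treeRank Q ≤ indProd ε {i : ℕ | ∃ h : i < l + 1, F ⟨i, h⟩ = j} l :=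
  statement2_general P hWF k l ε hrank F f hf j Q hQP hconst
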